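/- arXiv:0811.3075 — 2 statements merged into one kernel-verified Lean document; each statement's English description precedes it below -/
import Mathlib

section
/- For all real numbers a, b with 0 < a < 1, 0 < b < 1, and every x > 0, the quadruple integral ∫₀^∞ ∫₀^{x+v} ∫₀^∞ ∫₀^w (1 − e^{−(x+v−y)})^{a−1} (1 − e^{−v})^{b−1} (1 − e^{−(w−u)})^{b−1} e^{−v−w+u} e^{(b+1)(y+w)} (e^{y+w} − 1)^{−(a+b+1)} du dw dy dv (integrating over v > 0, 0 ≤ y < x+v, 0 < u ≤ w) equals π Γ(a) Γ(b) / (b sin(πa) Γ(a+b+1)). -/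
open MeasureTheory Real Set
open ProbabilityTheory (beta)

/-!
Integrate from the inside out. After the substitution `t = e^{-s}` every layer becomes a
Beta-type integral: the `u`-integral is `(1 - e^{-w})^b / b`; the `w`-integral is
`B(a, b + 1) (e^y - 1)^{-a}`, once the Möbius map `t ↦ (1 - p) t / (1 - p t)` (`p = e^{-y}`)
straightens the factor `(1 - p t)^{-(a + b + 1)}`; the `y`-integral is an affinely rescaled
`B(a, 1 - a) = π / sin (π a)`, independent of `x + v`; and the `v`-integral is `1 / b`.
Finally `B(a, b + 1) / b = Γ(a) Γ(b) / Γ(a + b + 1)`.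
-/

theorem integral_Ioo_rpow_mul_one_sub_rpow {s t : ℝ} (hs : 0 < s) (ht : 0 < t) :
    ∫ x in Ioo (0:ℝ) 1, x ^ (s - 1) * (1 - x) ^ (t - 1) = beta s t := by
  have key := Complex.Gamma_mul_Gamma_eq_betaIntegral (s := s) (t := t) (by simpa) (by simpa)
  have hbeta : Complex.betaIntegral s t
      = ((∫ x in Ioo (0:ℝ) 1, x ^ (s - 1) * (1 - x) ^ (t - 1) : ℝ) : ℂ) := by
    rw [Complex.betaIntegral, intervalIntegral.integral_of_le zero_le_one,
      ← integral_Ioc_eq_integral_Ioo, ← integral_complex_ofReal]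
    refine setIntegral_congr_fun measurableSet_Ioc fun x hx ↦ ?_
    push_cast [Complex.ofReal_cpow hx.1.le, Complex.ofReal_cpow (sub_nonneg.2 hx.2)]
    ring
  rw [hbeta, ← Complex.ofReal_add, Complex.Gamma_ofReal, Complex.Gamma_ofReal,
    Complex.Gamma_ofReal] at key
  norm_cast at key
  rw [beta, key, mul_div_cancel_left₀ _ (Gamma_pos_of_pos (add_pos hs ht)).ne']

theorem integral_Ioo_sub_rpow_mul_sub_rpow {p q s t : ℝ} (hpq : p < q) (hs : 0 < s)
    (ht : 0 < t) :
    ∫ x in Ioo p q, (x - p) ^ (s - 1) * (q - x) ^ (t - 1)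
      = (q - p) ^ (s + t - 1) * beta s t := by
  have hL : 0 < q - p := sub_pos.2 hpq
  have hscale := intervalIntegral.smul_integral_comp_add_mul
    (fun x ↦ (x - p) ^ (s - 1) * (q - x) ^ (t - 1)) (q - p) p (a := 0) (b := 1)
  simp only [mul_zero, add_zero, mul_one, add_sub_cancel, smul_eq_mul] at hscale
  rw [← integral_Ioc_eq_integral_Ioo, ← intervalIntegral.integral_of_le hpq.le, ← hscale,
    intervalIntegral.integral_congr (g := fun x ↦ (q - p) ^ (s - 1) * (q - p) ^ (t - 1) *
      (x ^ (s - 1) * (1 - x) ^ (t - 1))),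
    intervalIntegral.integral_const_mul, intervalIntegral.integral_of_le zero_le_one,
    integral_Ioc_eq_integral_Ioo, integral_Ioo_rpow_mul_one_sub_rpow hs ht, ← mul_assoc,
    show s + t - 1 = 1 + (s - 1) + (t - 1) by ring, rpow_add hL, rpow_add hL, rpow_one]
  · ring
  · intro x hx
    rw [uIcc_of_le zero_le_one] at hx
    simp only [add_sub_cancel_left, show q - (p + (q - p) * x) = (q - p) * (1 - x) by ring]
    rw [mul_rpow hL.le hx.1, mul_rpow hL.le (sub_nonneg.2 hx.2)]
    ring

theorem integral_Ioo_one_sub_rpow {p c : ℝ} (hp : p < 1) (hc : 0 < c) :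
    ∫ t in Ioo p 1, (1 - t) ^ (c - 1) = (1 - p) ^ c / c := by
  rw [← integral_Ioc_eq_integral_Ioo, ← intervalIntegral.integral_of_le hp.le,
    intervalIntegral.integral_comp_sub_left (fun t ↦ t ^ (c - 1)), sub_self,
    integral_rpow (Or.inl (by linarith)), sub_add_cancel, zero_rpow hc.ne', sub_zero]

theorem one_sub_mul_pos {p x : ℝ} (hp : p < 1) (hx0 : 0 ≤ x) (hx1 : x ≤ 1) :
    0 < 1 - p * x := by
  rcases le_or_gt p 0 with h | h <;> nlinarith

theorem image_moebius_Ioo {p : ℝ} (hp : p < 1) :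
    (fun x ↦ (1 - p) * x / (1 - p * x)) '' Ioo 0 1 = Ioo 0 1 := by
  have hc : 0 < 1 - p := sub_pos.2 hp
  ext y
  constructor
  · rintro ⟨x, hx, rfl⟩
    have hD := one_sub_mul_pos hp hx.1.le hx.2.le
    exact ⟨div_pos (mul_pos hc hx.1) hD, (div_lt_one hD).2 (by nlinarith [hx.2])⟩
  · rintro ⟨hy0, hy1⟩
    have hE : 0 < 1 - p + p * y := by nlinarith
    refine ⟨y / (1 - p + p * y), ⟨div_pos hy0 hE, (div_lt_one hE).2 (by nlinarith)⟩, ?_⟩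
    have h1 : 1 - p * (y / (1 - p + p * y)) = (1 - p) / (1 - p + p * y) := by
      field_simp
      ring
    simp only [h1]
    field_simp

theorem integral_Ioo_rpow_mul_one_sub_rpow_mul_one_sub_mul_rpow {p s t : ℝ} (hp : p < 1)
    (hs : 0 < s) (ht : 0 < t) :
    ∫ x in Ioo (0:ℝ) 1, x ^ (s - 1) * (1 - x) ^ (t - 1) * (1 - p * x) ^ (-(s + t))
      = (1 - p) ^ (-s) * beta s t := by
  have hc : 0 < 1 - p := sub_pos.2 hp
  have hD : ∀ x ∈ Ioo (0:ℝ) 1, 0 < 1 - p * x := fun x hx ↦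
    one_sub_mul_pos hp hx.1.le hx.2.le
  have hderiv : ∀ x ∈ Ioo (0:ℝ) 1, HasDerivWithinAt (fun x ↦ (1 - p) * x / (1 - p * x))
      ((1 - p) / (1 - p * x) ^ 2) (Ioo 0 1) x := fun x hx ↦ by
    have := ((hasDerivAt_id x).const_mul (1 - p)).div
      (((hasDerivAt_id x).const_mul p).const_sub 1) (hD x hx).ne'
    refine (this.congr_deriv ?_).hasDerivWithinAt
    simp only [id]
    ring
  have hinj : InjOn (fun x ↦ (1 - p) * x / (1 - p * x)) (Ioo 0 1) := fun x hx y hy h ↦ by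
    rw [div_eq_div_iff (hD x hx).ne' (hD y hy).ne'] at h
    exact mul_left_cancel₀ hc.ne' (by linear_combination h)
  have hsubst := integral_image_eq_integral_abs_deriv_smul measurableSet_Ioo hderiv hinj
    (fun y ↦ y ^ (s - 1) * (1 - y) ^ (t - 1))
  rw [image_moebius_Ioo hp, integral_Ioo_rpow_mul_one_sub_rpow hs ht,
    setIntegral_congr_fun measurableSet_Ioo (g := fun x ↦ (1 - p) ^ s *
      (x ^ (s - 1) * (1 - x) ^ (t - 1) * (1 - p * x) ^ (-(s + t)))),
    integral_const_mul] at hsubst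
  · rw [hsubst, rpow_neg hc.le, ← mul_assoc, inv_mul_cancel₀ (rpow_pos_of_pos hc s).ne',
      one_mul]
  · intro x hx
    have hD := hD x hx
    have h1 : 1 - (1 - p) * x / (1 - p * x) = (1 - x) / (1 - p * x) := by
      field_simp
      ring
    simp only [smul_eq_mul, h1]
    rw [abs_of_pos (by positivity), div_rpow (mul_pos hc hx.1).le hD.le,
      div_rpow (sub_pos.2 hx.2).le hD.le, mul_rpow hc.le hx.1.le, rpow_sub_one hc.ne',
      rpow_sub_one hD.ne', rpow_sub_one hD.ne', rpow_neg hD.le, rpow_add hD]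
    field_simp

theorem integral_image_exp_neg {s : Set ℝ} (hs : MeasurableSet s) (g : ℝ → ℝ) :
    ∫ t in (fun v ↦ exp (-v)) '' s, g t = ∫ v in s, exp (-v) * g (exp (-v)) := by
  rw [integral_image_eq_integral_abs_deriv_smul hs
    (fun v _ ↦ (hasDerivAt_neg v).exp.hasDerivWithinAt)
    (fun v _ w _ h ↦ neg_injective (exp_injective h))]
  simp [abs_of_pos (exp_pos _)]

theorem image_exp_neg_Ioi_zero : (fun v ↦ exp (-v)) '' Ioi 0 = Ioo 0 1 := by
  change (exp ∘ Neg.neg) '' _ = _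
  rw [image_comp]
  simp

theorem image_exp_neg_Ioo_zero (z : ℝ) : (fun v ↦ exp (-v)) '' Ioo 0 z = Ioo (exp (-z)) 1 := by
  change (exp ∘ Neg.neg) '' _ = _
  rw [image_comp]
  simp

theorem integral_Ioo_exp_neg_mul_one_sub_exp_neg_rpow {c w : ℝ} (hc : 0 < c) (hw : 0 < w) :
    ∫ v in Ioo 0 w, exp (-v) * (1 - exp (-v)) ^ (c - 1) = (1 - exp (-w)) ^ c / c := by
  rw [← integral_image_exp_neg measurableSet_Ioo (fun t ↦ (1 - t) ^ (c - 1)),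
    image_exp_neg_Ioo_zero, integral_Ioo_one_sub_rpow (exp_lt_one_iff.2 (neg_lt_zero.2 hw)) hc]

theorem integral_Ioi_exp_neg_mul_one_sub_exp_neg_rpow {c : ℝ} (hc : 0 < c) :
    ∫ v in Ioi 0, exp (-v) * (1 - exp (-v)) ^ (c - 1) = 1 / c := by
  rw [← integral_image_exp_neg measurableSet_Ioi (fun t ↦ (1 - t) ^ (c - 1)),
    image_exp_neg_Ioi_zero, integral_Ioo_one_sub_rpow zero_lt_one hc, sub_zero, one_rpow]

theorem integral_Ioo_exp_sub_mul_one_sub_exp_sub_rpow {c w : ℝ} (hc : 0 < c) (hw : 0 < w) :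
    ∫ u in Ioo 0 w, exp (-(w - u)) * (1 - exp (-(w - u))) ^ (c - 1)
      = (1 - exp (-w)) ^ c / c := by
  rw [← integral_Ioc_eq_integral_Ioo, ← intervalIntegral.integral_of_le hw.le,
    intervalIntegral.integral_comp_sub_left (fun v ↦ exp (-v) * (1 - exp (-v)) ^ (c - 1)),
    sub_self, sub_zero, intervalIntegral.integral_of_le hw.le, integral_Ioc_eq_integral_Ioo,
    integral_Ioo_exp_neg_mul_one_sub_exp_neg_rpow hc hw]

theorem integral_Ioi_exp_mul_exp_sub_one_rpow_mul_one_sub_exp_neg_rpow {a b y : ℝ}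
    (ha : 0 < a) (hb : -1 < b) (hy : 0 < y) :
    ∫ w in Ioi 0, exp ((b + 1) * (y + w)) * (exp (y + w) - 1) ^ (-(a + b + 1))
        * (1 - exp (-w)) ^ b
      = beta a (b + 1) * (exp y - 1) ^ (-a) := by
  have hp := exp_pos (-y)
  have hp1 : exp (-y) < 1 := exp_lt_one_iff.2 (neg_lt_zero.2 hy)
  have hsubst : ∀ w ∈ Ioi 0, exp ((b + 1) * (y + w)) * (exp (y + w) - 1) ^ (-(a + b + 1))
        * (1 - exp (-w)) ^ b
      = exp (-w) * (exp (-y) ^ a * (exp (-w) ^ (a - 1) * (1 - exp (-w)) ^ (b + 1 - 1)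
          * (1 - exp (-y) * exp (-w)) ^ (-(a + (b + 1))))) := by
    intro w hw
    have ht := exp_pos (-w)
    have hm : exp (-(y + w)) = exp (-y) * exp (-w) := by rw [neg_add, exp_add]
    have hm1 : exp (-y) * exp (-w) < 1 := hm ▸ exp_lt_one_iff.2 (by linarith [mem_Ioi.1 hw])
    have hpt := mul_pos hp ht
    have e1 : exp ((b + 1) * (y + w)) = (exp (-y) * exp (-w)) ^ (-(b + 1)) := by
      rw [← hm, ← exp_mul]
      ring_nf
    have e2 : exp (y + w) - 1 = (1 - exp (-y) * exp (-w)) / (exp (-y) * exp (-w)) := by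
      rw [← hm, exp_neg]
      field_simp
    have e3 : (exp (-y) * exp (-w)) ^ (-(b + 1))
        = (exp (-y) * exp (-w)) ^ a * (exp (-y) * exp (-w)) ^ (-(a + b + 1)) := by
      rw [← rpow_add hpt]
      ring_nf
    rw [e1, e2, e3, div_rpow (sub_pos.2 hm1).le hpt.le, mul_rpow hp.le ht.le,
      rpow_sub_one ht.ne', show b + 1 - 1 = b by ring, show a + (b + 1) = a + b + 1 by ring]
    field_simp
  rw [setIntegral_congr_fun measurableSet_Ioi hsubst,
    ← integral_image_exp_neg measurableSet_Ioi (fun t ↦ exp (-y) ^ a * (t ^ (a - 1)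
      * (1 - t) ^ (b + 1 - 1) * (1 - exp (-y) * t) ^ (-(a + (b + 1))))),
    image_exp_neg_Ioi_zero, integral_const_mul,
    integral_Ioo_rpow_mul_one_sub_rpow_mul_one_sub_mul_rpow hp1 ha (by linarith),
    show exp y - 1 = (1 - exp (-y)) / exp (-y) by rw [exp_neg]; field_simp,
    div_rpow (sub_pos.2 hp1).le hp.le, rpow_neg hp.le]
  field_simp

theorem integral_Ioi_exp_mul_exp_sub_one_rpow_mul_integral_Ioo {a b y : ℝ} (ha : 0 < a)
    (hb : 0 < b) (hy : 0 < y) :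
    ∫ w in Ioi 0, exp ((b + 1) * (y + w)) * (exp (y + w) - 1) ^ (-(a + b + 1))
        * ∫ u in Ioo 0 w, exp (-(w - u)) * (1 - exp (-(w - u))) ^ (b - 1)
      = beta a (b + 1) / b * (exp y - 1) ^ (-a) := by
  rw [setIntegral_congr_fun measurableSet_Ioi fun w hw ↦ by
      rw [integral_Ioo_exp_sub_mul_one_sub_exp_sub_rpow hb hw, ← mul_div_assoc],
    integral_div,
    integral_Ioi_exp_mul_exp_sub_one_rpow_mul_one_sub_exp_neg_rpow ha (by linarith) hy]
  ring

theorem integral_Ioo_one_sub_exp_rpow_mul_exp_sub_one_rpow {a z : ℝ} (ha : 0 < a)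
    (ha1 : a < 1) (hz : 0 < z) :
    ∫ y in Ioo 0 z, (1 - exp (-(z - y))) ^ (a - 1) * (exp y - 1) ^ (-a) = π / sin (π * a) := by
  have hsubst : ∀ y ∈ Ioo 0 z, (1 - exp (-(z - y))) ^ (a - 1) * (exp y - 1) ^ (-a)
      = exp (-y) * ((exp (-y) - exp (-z)) ^ (a - 1) * (1 - exp (-y)) ^ (1 - a - 1)) := by
    rintro y ⟨hy0, hyz⟩
    have ht := exp_pos (-y)
    have h1 : 1 - exp (-(z - y)) = (exp (-y) - exp (-z)) / exp (-y) := by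
      rw [show -(z - y) = -z - -y by ring, exp_sub]
      field_simp
    have h2 : exp y - 1 = (1 - exp (-y)) / exp (-y) := by
      rw [exp_neg]
      field_simp
    have h3 : exp (-z) < exp (-y) := exp_lt_exp.2 (by linarith)
    have h4 : exp (-y) < 1 := exp_lt_one_iff.2 (neg_lt_zero.2 hy0)
    rw [h1, h2, div_rpow (sub_pos.2 h3).le ht.le, div_rpow (sub_pos.2 h4).le ht.le,
      show 1 - a - 1 = -a by ring, rpow_sub_one ht.ne', rpow_neg ht.le]
    field_simp
  rw [setIntegral_congr_fun measurableSet_Ioo hsubst,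
    ← integral_image_exp_neg measurableSet_Ioo
      (fun t ↦ (t - exp (-z)) ^ (a - 1) * (1 - t) ^ (1 - a - 1)),
    image_exp_neg_Ioo_zero,
    integral_Ioo_sub_rpow_mul_sub_rpow (exp_lt_one_iff.2 (neg_lt_zero.2 hz)) ha (by linarith),
    beta, add_sub_cancel, Gamma_one, sub_self, rpow_zero, one_mul, div_one,
    Gamma_mul_Gamma_one_sub]

theorem statement13_general (a b x : ℝ) (ha : 0 < a) (ha1 : a < 1) (hb : 0 < b)
    (hx : 0 < x) :
    (∫ v in Ioi (0:ℝ), ∫ y in Ioo (0:ℝ) (x + v), ∫ w in Ioi (0:ℝ), ∫ u in Ioo (0:ℝ) w,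
        (1 - Real.exp (-(x + v - y))) ^ (a - 1) * (1 - Real.exp (-v)) ^ (b - 1)
          * (1 - Real.exp (-(w - u))) ^ (b - 1) * Real.exp (-v - w + u)
          * Real.exp ((b + 1) * (y + w)) * (Real.exp (y + w) - 1) ^ (-(a + b + 1)))
      = π * Gamma a * Gamma b / (b * Real.sin (π * a) * Gamma (a + b + 1)) := by
  have hfactor : ∀ v y w u : ℝ,
      (1 - exp (-(x + v - y))) ^ (a - 1) * (1 - exp (-v)) ^ (b - 1)
          * (1 - exp (-(w - u))) ^ (b - 1) * exp (-v - w + u)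
          * exp ((b + 1) * (y + w)) * (exp (y + w) - 1) ^ (-(a + b + 1))
        = exp (-v) * (1 - exp (-v)) ^ (b - 1) * ((1 - exp (-(x + v - y))) ^ (a - 1)
          * (exp ((b + 1) * (y + w)) * (exp (y + w) - 1) ^ (-(a + b + 1))
            * (exp (-(w - u)) * (1 - exp (-(w - u))) ^ (b - 1)))) := by
    intro v y w u
    rw [show -v - w + u = -v + -(w - u) by ring, exp_add]
    ring
  have hsin : sin (π * a) ≠ 0 :=
    (sin_pos_of_pos_of_lt_pi (by positivity) (by nlinarith [pi_pos])).ne'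
  simp only [hfactor, integral_const_mul]
  rw [setIntegral_congr_fun measurableSet_Ioi fun v hv ↦ by
      rw [setIntegral_congr_fun measurableSet_Ioo fun y hy ↦ by
          rw [integral_Ioi_exp_mul_exp_sub_one_rpow_mul_integral_Ioo ha hb hy.1, mul_left_comm],
        integral_const_mul, integral_Ioo_one_sub_exp_rpow_mul_exp_sub_one_rpow ha ha1
          (add_pos hx hv)],
    integral_mul_const, integral_Ioi_exp_neg_mul_one_sub_exp_neg_rpow hb, beta,
    Gamma_add_one hb.ne', ← add_assoc]
  field_simp

theorem statement13 (a b x : ℝ) (ha : 0 < a) (ha1 : a < 1) (hb : 0 < b) (hb1 : b < 1)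
    (hx : 0 < x) :
    (∫ v in Ioi (0:ℝ), ∫ y in Ioo (0:ℝ) (x + v), ∫ w in Ioi (0:ℝ), ∫ u in Ioo (0:ℝ) w,
        (1 - Real.exp (-(x + v - y))) ^ (a - 1) * (1 - Real.exp (-v)) ^ (b - 1)
          * (1 - Real.exp (-(w - u))) ^ (b - 1) * Real.exp (-v - w + u)
          * Real.exp ((b + 1) * (y + w)) * (Real.exp (y + w) - 1) ^ (-(a + b + 1)))
      = π * Gamma a * Gamma b / (b * Real.sin (π * a) * Gamma (a + b + 1)) :=
  statement13_general a b x ha ha1 hb hx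
end

section
/- For all real numbers a, c with 0 < a < 1, 0 < c < 1, and all real 0 < x < b, the triple integral ∫₀^{b−x} ∫ᵤ^b ∫₀^∞ (b−x−u)^{a−1} (v−u)^{c−1} (b−v)^a (y+b)^c (b−u)^{−(a+c)} (y+v)^{−(a+c+1)} dy dv du equals π Γ(a) Γ(c) / (sin(πa) Γ(a+c+1)); in particular the value depends on neither x nor b. -/
/-!
The inner integral over `y` is reduced, by the substitution `t = (b - v) / (y + v)`, to
`(b - v)⁻ᵃ ∫₀^{(b-v)/v} t^(a-1) (1+t)^c dt`. Exchanging the `v`- and `t`-integrations, the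
`v`-integral becomes elementary, and a linear substitution leaves the Beta integral `B(a, c+1)`,
so the double inner integral is `(b - u)^(a+c) u^(-a) Γ(a) Γ(c) / Γ(a+c+1)`. The remaining
`u`-integral is `B(1-a, a) = Γ(a) Γ(1-a) = π / sin(π a)`, independent of `b - x`.
-/

open MeasureTheory Real Set

theorem integral_Ioo_rpow_mul_one_sub_rpow_s15 {p q : ℝ} (hp : 0 < p) (hq : 0 < q) :
    ∫ t in Ioo 0 1, t ^ (p - 1) * (1 - t) ^ (q - 1) = Gamma p * Gamma q / Gamma (p + q) := by
  have hbeta := Complex.Gamma_mul_Gamma_eq_betaIntegral (s := p) (t := q)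
    (by simpa using hp) (by simpa using hq)
  have hcast : Complex.betaIntegral p q
      = ((∫ t in (0:ℝ)..1, t ^ (p - 1) * (1 - t) ^ (q - 1) : ℝ) : ℂ) := by
    rw [Complex.betaIntegral, ← intervalIntegral.integral_ofReal]
    refine intervalIntegral.integral_congr fun t ⟨ht₀, ht₁⟩ => ?_
    simp only [zero_le_one, inf_of_le_left, sup_of_le_right] at ht₀ ht₁
    push_cast
    rw [Complex.ofReal_cpow ht₀, Complex.ofReal_cpow (sub_nonneg.mpr ht₁)]
    push_cast
    ring_nf
  rw [hcast, ← Complex.ofReal_add, Complex.Gamma_ofReal, Complex.Gamma_ofReal,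
    Complex.Gamma_ofReal, ← Complex.ofReal_mul, ← Complex.ofReal_mul,
    Complex.ofReal_inj] at hbeta
  rw [← integral_Ioc_eq_integral_Ioo, ← intervalIntegral.integral_of_le zero_le_one, hbeta,
    mul_div_cancel_left₀ _ (Gamma_pos_of_pos (add_pos hp hq)).ne']

theorem integral_Ioo_rpow_mul_sub_rpow {p q T : ℝ} (hp : 0 < p) (hq : 0 < q) (hT : 0 < T) :
    ∫ t in Ioo 0 T, t ^ (p - 1) * (T - t) ^ (q - 1)
      = T ^ (p + q - 1) * (Gamma p * Gamma q / Gamma (p + q)) := by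
  rw [← integral_Ioo_rpow_mul_one_sub_rpow_s15 hp hq, ← integral_Ioc_eq_integral_Ioo,
    ← integral_Ioc_eq_integral_Ioo, ← intervalIntegral.integral_of_le hT.le,
    ← intervalIntegral.integral_of_le zero_le_one, ← intervalIntegral.integral_const_mul]
  have hscale := intervalIntegral.smul_integral_comp_mul_left
    (fun t => t ^ (p - 1) * (T - t) ^ (q - 1)) T (a := 0) (b := 1)
  rw [mul_zero, mul_one, smul_eq_mul, ← intervalIntegral.integral_const_mul] at hscale
  rw [← hscale]
  refine intervalIntegral.integral_congr fun t ⟨ht₀, ht₁⟩ => ?_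
  simp only [zero_le_one, inf_of_le_left, sup_of_le_right] at ht₀ ht₁
  rw [show T - T * t = T * (1 - t) by ring, Real.mul_rpow hT.le ht₀,
    Real.mul_rpow hT.le (sub_nonneg.mpr ht₁), show p + q - 1 = 1 + (p - 1) + (q - 1) by ring,
    Real.rpow_add hT, Real.rpow_add hT, Real.rpow_one]
  ring

theorem integral_Ioi_rpow_add_mul_rpow_add {v b : ℝ} (a c : ℝ) (hv : 0 < v) (hvb : v < b) :
    ∫ y in Ioi (0:ℝ), (y + b) ^ c * (y + v) ^ (-(a + c + 1))
      = (b - v) ^ (-a) * ∫ t in Ioo 0 ((b - v) / v), t ^ (a - 1) * (1 + t) ^ c := by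
  set k := b - v
  have hk : 0 < k := by linarith
  -- the substitution `y = k / t - v`, i.e. `t = (b - v) / (y + v)`
  have himage : (fun t => k / t - v) '' Ioo 0 (k / v) = Ioi 0 := by
    ext y
    constructor
    · rintro ⟨t, ⟨ht, htk⟩, rfl⟩
      exact sub_pos.mpr (by rwa [lt_div_iff₀ ht, mul_comm, ← lt_div_iff₀ hv])
    · intro (hy : 0 < y)
      refine ⟨k / (y + v), ⟨by positivity, div_lt_div_of_pos_left hk hv (by linarith)⟩, ?_⟩
      field_simp
      ring
  have hderiv : ∀ t ∈ Ioo 0 (k / v),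
      HasDerivWithinAt (fun t => k / t - v) (-(k / t ^ 2)) (Ioo 0 (k / v)) t := by
    intro t ⟨ht, _⟩
    have := ((hasDerivAt_inv ht.ne').const_mul k).sub_const v
    simpa [div_eq_mul_inv] using this.hasDerivWithinAt
  have hinj : InjOn (fun t => k / t - v) (Ioo 0 (k / v)) := by
    intro t₁ ⟨ht₁, _⟩ t₂ ⟨ht₂, _⟩ h
    have : k / t₁ = k / t₂ := sub_left_injective h
    rwa [div_eq_div_iff ht₁.ne' ht₂.ne', mul_right_inj' hk.ne', eq_comm] at this
  rw [← himage, integral_image_eq_integral_abs_deriv_smul measurableSet_Ioo hderiv hinj,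
    ← integral_const_mul]
  refine setIntegral_congr_fun measurableSet_Ioo fun t ⟨ht, _⟩ => ?_
  have h1 : 0 < 1 + t := by linarith
  have hb : k / t - v + b = k * (1 + t) / t := by field_simp; ring
  have hv' : k / t - v + v = k / t := by ring
  rw [smul_eq_mul, hb, hv', abs_neg, abs_of_pos (by positivity),
    Real.div_rpow (by positivity) ht.le, Real.mul_rpow hk.le h1.le, Real.div_rpow hk.le ht.le]
  simp only [Real.rpow_neg hk.le, Real.rpow_neg ht.le, Real.rpow_add hk, Real.rpow_add ht,
    Real.rpow_sub_one ht.ne', Real.rpow_one]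
  field_simp

theorem integrableOn_Ioo_sub_rpow {c u s : ℝ} (hc : 0 < c) (hus : u ≤ s) :
    IntegrableOn (fun v => (v - u) ^ (c - 1)) (Ioo u s) := by
  have h := (intervalIntegral.intervalIntegrable_rpow' (r := c - 1) (a := u - u) (b := s - u)
    (by linarith)).comp_sub_right u
  rw [sub_add_cancel, sub_add_cancel] at h
  exact (intervalIntegrable_iff_integrableOn_Ioo_of_le hus).mp h

theorem integral_Ioo_sub_rpow {c u s : ℝ} (hc : 0 < c) (hus : u ≤ s) :
    ∫ v in Ioo u s, (v - u) ^ (c - 1) = (s - u) ^ c / c := by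
  rw [← integral_Ioc_eq_integral_Ioo, ← intervalIntegral.integral_of_le hus,
    intervalIntegral.integral_comp_sub_right (fun v => v ^ (c - 1)) u, sub_self,
    integral_rpow (Or.inl (by linarith)), sub_add_cancel, Real.zero_rpow hc.ne', sub_zero]

theorem integral_Ioo_rpow_sub_mul_integral_Ioo {c u b : ℝ} {φ : ℝ → ℝ} (hc : 0 < c)
    (hu : 0 < u) (hub : u < b) (hφ : IntegrableOn φ (Ioo 0 ((b - u) / u))) :
    ∫ v in Ioo u b, (v - u) ^ (c - 1) * ∫ t in Ioo 0 ((b - v) / v), φ t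
      = ∫ t in Ioo 0 ((b - u) / u), ((b / (1 + t) - u) ^ c / c) * φ t := by
  set T := (b - u) / u
  -- `t < (b - v) / v` and `v < b / (1 + t)` both say `(v, t) ∈ S`
  set S : Set (ℝ × ℝ) := {p | p.1 * (1 + p.2) < b}
  set g : ℝ × ℝ → ℝ := fun p => (p.1 - u) ^ (c - 1) * φ p.2
  have hS : MeasurableSet S := measurableSet_lt (by fun_prop) measurable_const
  have hslice_t : ∀ v ∈ Ioo u b, Ioo 0 T ∩ Prod.mk v ⁻¹' S = Ioo 0 ((b - v) / v) := by
    intro v ⟨huv, hvb⟩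
    have hv : 0 < v := hu.trans huv
    have hvT : (b - v) / v ≤ T := by
      rw [div_le_div_iff₀ hv hu]; nlinarith
    ext t
    simp only [S, mem_inter_iff, mem_Ioo, mem_preimage, mem_ofPred_eq, lt_div_iff₀ hv]
    constructor
    · rintro ⟨⟨ht, _⟩, h⟩; exact ⟨ht, by linarith⟩
    · rintro ⟨ht, h⟩
      exact ⟨⟨ht, lt_of_lt_of_le ((lt_div_iff₀ hv).mpr h) hvT⟩, by linarith⟩
  have hslice_v :
      ∀ t ∈ Ioo 0 T, Ioo u b ∩ (fun v => (v, t)) ⁻¹' S = Ioo u (b / (1 + t)) := by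
    intro t ⟨ht, _⟩
    have h1 : 0 < 1 + t := by linarith
    have hbt : b / (1 + t) ≤ b := div_le_self (hu.trans hub).le (by linarith)
    ext v
    simp only [S, mem_inter_iff, mem_Ioo, mem_preimage, mem_ofPred_eq, lt_div_iff₀ h1]
    exact ⟨fun ⟨⟨h, _⟩, h'⟩ => ⟨h, h'⟩,
      fun ⟨h, h'⟩ => ⟨⟨h, lt_of_lt_of_le ((lt_div_iff₀ h1).mpr h') hbt⟩, h'⟩⟩
  have hint : Integrable (S.indicator g)
      ((volume.restrict (Ioo u b)).prod (volume.restrict (Ioo 0 T))) :=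
    ((integrableOn_Ioo_sub_rpow hc hub.le).mul_prod hφ).indicator hS
  calc ∫ v in Ioo u b, (v - u) ^ (c - 1) * ∫ t in Ioo 0 ((b - v) / v), φ t
      = ∫ v in Ioo u b, ∫ t in Ioo 0 T, S.indicator g (v, t) := by
        refine setIntegral_congr_fun measurableSet_Ioo fun v hv => ?_
        simp_rw [← Set.indicator_comp_right (Prod.mk v)]
        rw [setIntegral_indicator (measurable_prodMk_left hS), hslice_t v hv,
          ← integral_const_mul]
        rfl
    _ = ∫ t in Ioo 0 T, ∫ v in Ioo u b, S.indicator g (v, t) := integral_integral_swap hint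
    _ = ∫ t in Ioo 0 T, ((b / (1 + t) - u) ^ c / c) * φ t := by
        refine setIntegral_congr_fun measurableSet_Ioo fun t ht => ?_
        simp_rw [← Set.indicator_comp_right (fun v => (v, t))]
        rw [setIntegral_indicator (measurable_prodMk_right hS), hslice_v t ht]
        simp only [g, Function.comp_def]
        have htu : t * u < b - u := (lt_div_iff₀ hu).mp ht.2
        rw [integral_mul_const, integral_Ioo_sub_rpow hc
          ((le_div_iff₀ (by linarith [ht.1])).mpr (by linarith))]

theorem integrableOn_Ioo_rpow_mul_one_add_rpow {a c T : ℝ} (ha : 0 < a) (hT : 0 < T) :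
    IntegrableOn (fun t => t ^ (a - 1) * (1 + t) ^ c) (Ioo 0 T) :=
  ((intervalIntegral.integrableOn_Ioo_rpow_iff hT).mpr (by linarith)).mul_continuousOn_of_subset
    (ContinuousOn.rpow_const (by fun_prop) fun t ht => Or.inl (by linarith [ht.1]))
    measurableSet_Ioo isCompact_Icc Ioo_subset_Icc_self

theorem integral_Ioo_integral_Ioi_rpow_mul_rpow {a c u b : ℝ} (ha : 0 < a) (hc : 0 < c)
    (hu : 0 < u) (hub : u < b) :
    ∫ v in Ioo u b, ∫ y in Ioi (0:ℝ),
        (v - u) ^ (c - 1) * (b - v) ^ a * ((y + b) ^ c * (y + v) ^ (-(a + c + 1)))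
      = (b - u) ^ (a + c) * u ^ (-a) * (Gamma a * Gamma c / Gamma (a + c + 1)) := by
  set T := (b - u) / u
  have hT : 0 < T := div_pos (by linarith) hu
  calc _ = ∫ v in Ioo u b,
          (v - u) ^ (c - 1) * ∫ t in Ioo 0 ((b - v) / v), t ^ (a - 1) * (1 + t) ^ c := by
        refine setIntegral_congr_fun measurableSet_Ioo fun v ⟨huv, hvb⟩ => ?_
        have hbv : 0 < b - v := by linarith
        rw [integral_const_mul, integral_Ioi_rpow_add_mul_rpow_add a c (hu.trans huv) hvb,
          Real.rpow_neg hbv.le]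
        field_simp
    _ = ∫ t in Ioo 0 T, (b / (1 + t) - u) ^ c / c * (t ^ (a - 1) * (1 + t) ^ c) :=
        integral_Ioo_rpow_sub_mul_integral_Ioo hc hu hub
          (integrableOn_Ioo_rpow_mul_one_add_rpow ha hT)
    _ = u ^ c / c * ∫ t in Ioo 0 T, t ^ (a - 1) * (T - t) ^ (c + 1 - 1) := by
        rw [← integral_const_mul]
        refine setIntegral_congr_fun measurableSet_Ioo fun t ⟨ht, htT⟩ => ?_
        have h1 : 0 < 1 + t := by linarith
        have hTt : 0 < T - t := by linarith
        have hfactor : (b / (1 + t) - u) * (1 + t) = u * (T - t) := by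
          simp only [T]; field_simp; ring
        have hbt : 0 ≤ b / (1 + t) - u := by nlinarith
        have hpow : (b / (1 + t) - u) ^ c * (1 + t) ^ c = u ^ c * (T - t) ^ c := by
          rw [← Real.mul_rpow hbt h1.le, hfactor, Real.mul_rpow hu.le hTt.le]
        rw [add_sub_cancel_right]
        linear_combination t ^ (a - 1) / c * hpow
    _ = _ := by
        rw [integral_Ioo_rpow_mul_sub_rpow ha (by linarith) hT, Real.Gamma_add_one hc.ne',
          show a + (c + 1) = a + c + 1 by ring, add_sub_cancel_right,
          Real.div_rpow (by linarith) hu.le, Real.rpow_neg hu.le, Real.rpow_add hu]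
        field_simp

theorem statement15_general (a c x b : ℝ) (ha : 0 < a) (ha1 : a < 1) (hc : 0 < c)
    (hx : 0 < x) (hxb : x < b) :
    (∫ u in Ioo (0:ℝ) (b - x), ∫ v in Ioo u b, ∫ y in Ioi (0:ℝ),
        (b - x - u) ^ (a - 1) * (v - u) ^ (c - 1) * (b - v) ^ a * (y + b) ^ c
          * (b - u) ^ (-(a + c)) * (y + v) ^ (-(a + c + 1)))
      = π * Gamma a * Gamma c / (Real.sin (π * a) * Gamma (a + c + 1)) := by
  have hsin : Real.sin (π * a) ≠ 0 :=
    (Real.sin_pos_of_pos_of_lt_pi (by positivity) (by nlinarith [Real.pi_pos])).ne'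
  calc _ = ∫ u in Ioo (0:ℝ) (b - x), (b - x - u) ^ (a - 1) * (b - u) ^ (-(a + c))
          * ∫ v in Ioo u b, ∫ y in Ioi (0:ℝ),
            (v - u) ^ (c - 1) * (b - v) ^ a * ((y + b) ^ c * (y + v) ^ (-(a + c + 1))) := by
        simp only [← integral_const_mul]
        congr! 6
        ring
    _ = Gamma a * Gamma c / Gamma (a + c + 1)
          * ∫ u in Ioo (0:ℝ) (b - x), u ^ ((1 - a) - 1) * (b - x - u) ^ (a - 1) := by
        rw [← integral_const_mul]
        refine setIntegral_congr_fun measurableSet_Ioo fun u ⟨hu, hux⟩ => ?_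
        have hbu : 0 < b - u := by linarith
        rw [integral_Ioo_integral_Ioi_rpow_mul_rpow ha hc hu (by linarith), sub_sub_cancel_left,
          Real.rpow_neg hbu.le]
        field_simp
    _ = _ := by
        rw [integral_Ioo_rpow_mul_sub_rpow (by linarith) ha (by linarith), sub_add_cancel,
          sub_self, Real.rpow_zero, Real.Gamma_one, mul_comm (Gamma (1 - a)),
          Real.Gamma_mul_Gamma_one_sub]
        field_simp

theorem statement15 (a c x b : ℝ) (ha : 0 < a) (ha1 : a < 1) (hc : 0 < c) (hc1 : c < 1)
    (hx : 0 < x) (hxb : x < b) :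
    (∫ u in Ioo (0:ℝ) (b - x), ∫ v in Ioo u b, ∫ y in Ioi (0:ℝ),
        (b - x - u) ^ (a - 1) * (v - u) ^ (c - 1) * (b - v) ^ a * (y + b) ^ c
          * (b - u) ^ (-(a + c)) * (y + v) ^ (-(a + c + 1)))
      = π * Gamma a * Gamma c / (Real.sin (π * a) * Gamma (a + c + 1)) :=
  statement15_general a c x b ha ha1 hc hx hxb
end
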